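/- arXiv:2512.01778 — 2 statements merged into one kernel-verified Lean document; each statement's English description precedes it below -/
import Mathlib

section
/- With B = G A A^H G^H + η² G D_h^{-1} D_h^{-H} G^H + σ_z² I_L positive definite and m = η G D_h^{-1} u, the security level S = 1 − (1/K) m^H B^{-1} m satisfies 0 ≤ S ≤ 1. -/
/-!
With `B ⪰ M Mᴴ` and `x = B⁻¹ M u`, the number `c = (M u)ᴴ B⁻¹ (M u)` is both `⟨Mᴴ x, u⟩` and
`xᴴ B x ≥ ‖Mᴴ x‖²`, so Cauchy–Schwarz gives `c² ≤ ‖Mᴴ x‖² ‖u‖² ≤ c ‖u‖²`, i.e. `c ≤ ‖u‖²`.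
For the security level take `M = η G D_h⁻¹` and `u` the all-ones vector, so `‖u‖² = K`.
-/

open Matrix ComplexOrder

section

variable {𝕜 : Type*} [RCLike 𝕜] {n k : Type*} [Fintype n] [Fintype k]

open RCLike

theorem norm_star_dotProduct_sq_le (v w : n → 𝕜) :
    ‖star v ⬝ᵥ w‖ ^ 2 ≤ re (star v ⬝ᵥ v) * re (star w ⬝ᵥ w) := by
  have hnorm (x : n → 𝕜) : ‖WithLp.toLp 2 x‖ ^ 2 = re (star x ⬝ᵥ x) := by
    rw [@norm_sq_eq_re_inner 𝕜, EuclideanSpace.inner_eq_star_dotProduct, dotProduct_comm]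
  have hinner : star v ⬝ᵥ w = inner 𝕜 (WithLp.toLp 2 v) (WithLp.toLp 2 w) := by
    rw [EuclideanSpace.inner_eq_star_dotProduct, dotProduct_comm]
  rw [hinner, ← hnorm, ← hnorm, ← mul_pow]
  exact pow_le_pow_left₀ (norm_nonneg _) (norm_inner_le_norm _ _) 2

theorem Matrix.PosDef.re_star_dotProduct_inv_mulVec_le [DecidableEq n] {B : Matrix n n 𝕜}
    (hB : B.PosDef) {M : Matrix n k 𝕜} (hBM : (B - M * Mᴴ).PosSemidef) (u : k → 𝕜) :
    re (star (M *ᵥ u) ⬝ᵥ B⁻¹ *ᵥ M *ᵥ u) ≤ re (star u ⬝ᵥ u) := by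
  set c := star (M *ᵥ u) ⬝ᵥ B⁻¹ *ᵥ M *ᵥ u
  set x := B⁻¹ *ᵥ M *ᵥ u
  have hBx : B *ᵥ x = M *ᵥ u := by
    rw [mulVec_mulVec, mul_nonsing_inv _ ((isUnit_iff_isUnit_det B).mp hB.isUnit), one_mulVec]
  have hc_inner : c = star (Mᴴ *ᵥ x) ⬝ᵥ u := by
    rw [star_mulVec, conjTranspose_conjTranspose, ← dotProduct_mulVec, star_mulVec,
      hB.inv.isHermitian.eq, ← dotProduct_mulVec]
  have hc_quad : c = star x ⬝ᵥ B *ᵥ x := by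
    rw [hBx, star_mulVec, hB.inv.isHermitian.eq, ← dotProduct_mulVec]
  have hc_ge : re (star (Mᴴ *ᵥ x) ⬝ᵥ Mᴴ *ᵥ x) ≤ re c := by
    have hgram : star x ⬝ᵥ (M * Mᴴ) *ᵥ x = star (Mᴴ *ᵥ x) ⬝ᵥ Mᴴ *ᵥ x := by
      rw [← mulVec_mulVec, dotProduct_mulVec, star_mulVec Mᴴ x, conjTranspose_conjTranspose]
    have := hBM.re_dotProduct_nonneg x
    rw [sub_mulVec, dotProduct_sub, map_sub, hgram, ← hc_quad] at this
    linarith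
  have hc_nonneg : 0 ≤ re c := hB.inv.posSemidef.re_dotProduct_nonneg _
  have hu_nonneg : 0 ≤ re (star u ⬝ᵥ u) :=
    (RCLike.nonneg_iff.mp (dotProduct_star_self_nonneg u)).1
  have hcs : re c ^ 2 ≤ re c * re (star u ⬝ᵥ u) :=
    calc re c ^ 2 ≤ ‖c‖ ^ 2 := pow_le_pow_left₀ hc_nonneg (re_le_norm c) 2
      _ ≤ re (star (Mᴴ *ᵥ x) ⬝ᵥ Mᴴ *ᵥ x) * re (star u ⬝ᵥ u) :=
        hc_inner ▸ norm_star_dotProduct_sq_le _ _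
      _ ≤ re c * re (star u ⬝ᵥ u) := mul_le_mul_of_nonneg_right hc_ge hu_nonneg
  nlinarith

end

theorem stmt3_general (K m L : ℕ) (η σz : ℝ)
    (G : Matrix (Fin L) (Fin K) ℂ) (A : Matrix (Fin K) (Fin m) ℂ)
    (h : Fin K → ℂ)
    (B : Matrix (Fin L) (Fin L) ℂ)
    (hB : B = G * A * Aᴴ * Gᴴ
        + ((η : ℂ) ^ 2) •
            (G * Matrix.diagonal (fun k => (h k)⁻¹) * (Matrix.diagonal fun k => (h k)⁻¹)ᴴ * Gᴴ)
        + ((σz : ℂ) ^ 2) • (1 : Matrix (Fin L) (Fin L) ℂ))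
    (hBpd : B.PosDef)
    (mvec : Fin L → ℂ)
    (hm : mvec = (η : ℂ) • ((G * Matrix.diagonal fun k => (h k)⁻¹) *ᵥ fun _ => 1)) :
    0 ≤ 1 - (1 / K) * (star mvec ⬝ᵥ B⁻¹ *ᵥ mvec).re
    ∧ 1 - (1 / K) * (star mvec ⬝ᵥ B⁻¹ *ᵥ mvec).re ≤ 1 := by
  set M := (η : ℂ) • (G * Matrix.diagonal fun k => (h k)⁻¹)
  have hmvec : mvec = M *ᵥ fun _ => 1 := by rw [hm, smul_mulVec]
  have hBM : (B - M * Mᴴ).PosSemidef := by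
    have hsplit : B - M * Mᴴ = (G * A) * (G * A)ᴴ + ((σz : ℂ) ^ 2) • 1 := by
      simp only [hB, M, conjTranspose_smul, conjTranspose_mul, Complex.star_def,
        Complex.conj_ofReal, Matrix.smul_mul, Matrix.mul_smul, smul_smul, ← sq, Matrix.mul_assoc]
      abel
    rw [hsplit]
    exact (posSemidef_self_mul_conjTranspose _).add (PosSemidef.one.smul
      (by exact_mod_cast sq_nonneg σz))
  have hle : (star mvec ⬝ᵥ B⁻¹ *ᵥ mvec).re ≤ K := by
    simpa [hmvec, dotProduct] using hBpd.re_star_dotProduct_inv_mulVec_le hBM fun _ => 1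
  have hnonneg : 0 ≤ (star mvec ⬝ᵥ B⁻¹ *ᵥ mvec).re :=
    hBpd.inv.posSemidef.re_dotProduct_nonneg mvec
  rw [one_div_mul_eq_div]
  exact ⟨sub_nonneg.mpr (div_le_one_of_le₀ hle K.cast_nonneg),
    sub_le_self _ (div_nonneg hnonneg K.cast_nonneg)⟩

/-- with `B = G A Aᴴ Gᴴ + η² G D_h⁻¹ D_h⁻ᴴ Gᴴ + σ_z² I` positive definite and
`m = η G D_h⁻¹ u` (`u` all-ones), the security level `S = 1 − (1/K) m^H B⁻¹ m`
satisfies `0 ≤ S ≤ 1`. -/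
theorem stmt3 (K m L : ℕ) (hK : 0 < K) (η σz : ℝ) (hσz : 0 < σz)
    (G : Matrix (Fin L) (Fin K) ℂ) (A : Matrix (Fin K) (Fin m) ℂ)
    (h : Fin K → ℂ) (hh : ∀ k, h k ≠ 0)
    (B : Matrix (Fin L) (Fin L) ℂ)
    (hB : B = G * A * Aᴴ * Gᴴ
        + ((η : ℂ) ^ 2) •
            (G * Matrix.diagonal (fun k => (h k)⁻¹) * (Matrix.diagonal fun k => (h k)⁻¹)ᴴ * Gᴴ)
        + ((σz : ℂ) ^ 2) • (1 : Matrix (Fin L) (Fin L) ℂ))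
    (hBpd : B.PosDef)
    (mvec : Fin L → ℂ)
    (hm : mvec = (η : ℂ) • ((G * Matrix.diagonal fun k => (h k)⁻¹) *ᵥ fun _ => 1)) :
    0 ≤ 1 - (1 / K) * (star mvec ⬝ᵥ B⁻¹ *ᵥ mvec).re
    ∧ 1 - (1 / K) * (star mvec ⬝ᵥ B⁻¹ *ᵥ mvec).re ≤ 1 :=
  stmt3_general K m L η σz G A h B hB hBpd mvec hm
end

section
/- Let X, Y be jointly distributed random variables in ℂ^K × ℂ^L such that for every ψ ∈ ℝ the pair (e^{-iψ}X, Y) has the same joint distribution as (X, Y). Then E[X | Y] = 0 almost surely, and consequently the MMSE estimator of s = u^T X given Y is 0, so E[|E[s|Y] − s|²] = Var(s). -/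
/-!
Rotating by `ψ = π` shows that `(-X, Y)` has the same law as `(X, Y)`. Testing both laws
against `(x, y) ↦ 1_t(y) x`, every integral of `X` over an event `{Y ∈ t}` equals its own
negative and vanishes, which characterises `E[X | Y] = 0`. The same symmetry passes to
`s = ∑ₖ Xₖ`, so `E[s] = 0` and both sides of the MSE identity reduce to `E[|s|²]`.
-/

open MeasureTheory ProbabilityTheory

section SignSymmetry

variable {Ω E β : Type*} [MeasurableSpace Ω] {μ : Measure Ω}
  [NormedAddCommGroup E] [NormedSpace ℝ E] [MeasurableSpace E] [BorelSpace E]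
  [MeasurableSpace β] {X : Ω → E} {Y : Ω → β}

theorem setIntegral_preimage_eq_zero_of_identDistrib_neg
    (h : IdentDistrib (fun ω => (-X ω, Y ω)) (fun ω => (X ω, Y ω)) μ μ)
    {t : Set β} (ht : MeasurableSet t) (hY : Measurable Y) :
    ∫ ω in Y ⁻¹' t, X ω ∂μ = 0 := by
  have htest := (h.comp (u := (Prod.snd ⁻¹' t).indicator Prod.fst)
    (measurable_fst.indicator (measurable_snd ht))).integral_eq
  have hindicator : ∀ f : Ω → E,
      ∫ ω, ((Prod.snd ⁻¹' t).indicator Prod.fst ∘ fun ω => (f ω, Y ω)) ω ∂μ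
        = ∫ ω in Y ⁻¹' t, f ω ∂μ := fun f => by
    rw [← integral_indicator (hY ht)]
    rfl
  rw [hindicator, hindicator, integral_neg] at htest
  have : IsAddTorsionFree E := .of_isTorsionFree ℝ E
  exact neg_eq_self.mp htest

theorem condExp_comap_ae_eq_zero_of_identDistrib_neg [IsFiniteMeasure μ] [CompleteSpace E]
    (h : IdentDistrib (fun ω => (-X ω, Y ω)) (fun ω => (X ω, Y ω)) μ μ)
    (hX : Integrable X μ) (hY : Measurable Y) :
    μ[X | MeasurableSpace.comap Y inferInstance] =ᵐ[μ] 0 := by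
  refine (ae_eq_condExp_of_forall_setIntegral_eq hY.comap_le hX
    (fun _ _ _ => integrableOn_zero) (fun s hs _ => ?_) aestronglyMeasurable_const).symm
  obtain ⟨t, ht, rfl⟩ := hs
  rw [setIntegral_preimage_eq_zero_of_identDistrib_neg h ht hY]
  exact integral_zero _ _

end SignSymmetry

/-- if `(e^{-iψ}X, Y)` has the same joint law as `(X, Y)` for all `ψ`, then
`E[X | Y] = 0` a.s.; consequently the MMSE estimator of `s = u^T X` given `Y` is `0`, and
its MSE equals `Var(s)`. -/
theorem stmt4 {Ω : Type*} [MeasurableSpace Ω] (Pr : Measure Ω) [IsProbabilityMeasure Pr]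
    (K L : ℕ)
    (X : Ω → Fin K → ℂ) (Y : Ω → Fin L → ℂ)
    (hXint : Integrable X Pr) (hY : Measurable Y)
    (hsym : ∀ ψ : ℝ,
      Measure.map (fun ω => ((fun k => Complex.exp (-(ψ : ℂ) * Complex.I) * X ω k), Y ω)) Pr
        = Measure.map (fun ω => (X ω, Y ω)) Pr) :
    (Pr[X | MeasurableSpace.comap Y inferInstance]) =ᵐ[Pr] 0
    ∧ (Pr[fun ω => ∑ k, X ω k | MeasurableSpace.comap Y inferInstance]) =ᵐ[Pr] 0
    ∧ ∫ ω, ‖(Pr[fun ω' => ∑ k, X ω' k | MeasurableSpace.comap Y inferInstance]) ω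
          - ∑ k, X ω k‖ ^ 2 ∂Pr
      = ∫ ω, ‖(∑ k, X ω k) - ∫ ω', ∑ k, X ω' k ∂Pr‖ ^ 2 ∂Pr := by
  have hrot : Complex.exp (-(Real.pi : ℂ) * Complex.I) = -1 := by
    rw [neg_mul, Complex.exp_neg, Complex.exp_pi_mul_I]; norm_num
  have hX : IdentDistrib (fun ω => (-X ω, Y ω)) (fun ω => (X ω, Y ω)) Pr Pr := by
    refine ⟨hXint.aemeasurable.neg.prodMk hY.aemeasurable,
      hXint.aemeasurable.prodMk hY.aemeasurable, ?_⟩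
    simpa [hrot, Pi.neg_def] using hsym Real.pi
  set S : Ω → ℂ := fun ω => ∑ k, X ω k
  have hS : IdentDistrib (fun ω => (-S ω, Y ω)) (fun ω => (S ω, Y ω)) Pr Pr := by
    have hsum : Measurable fun p : (Fin K → ℂ) × (Fin L → ℂ) => (∑ k, p.1 k, p.2) :=
      (Finset.measurable_sum _ fun k _ => (measurable_pi_apply k).comp measurable_fst).prodMk
        measurable_snd
    simpa [Function.comp_def, S] using hX.comp hsum
  have hSint : Integrable S Pr := integrable_finsetSum _ fun k _ =>
    (ContinuousLinearMap.proj (R := ℂ) (φ := fun _ : Fin K => ℂ) k).integrable_comp hXint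
  have hcondS := condExp_comap_ae_eq_zero_of_identDistrib_neg hS hSint hY
  have hmean : ∫ ω, S ω ∂Pr = 0 := by
    rw [← integral_condExp hY.comap_le, integral_congr_ae hcondS, Pi.zero_def, integral_zero]
  refine ⟨condExp_comap_ae_eq_zero_of_identDistrib_neg hX hXint hY, hcondS, ?_⟩
  rw [hmean]
  refine integral_congr_ae ?_
  filter_upwards [hcondS] with ω hω
  simp [hω]
end
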